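/- Let e, f, g be nonzero real numbers and set D := −(e·f + f·g + g·e). If D > 0 and √D < |e|, √D < |f|, √D < |g|, then artanh(√D/e) + artanh(√D/f) + artanh(√D/g) = 0, where artanh is the inverse hyperbolic tangent. (This is the D > 0, arctanh part of the paper's Lemma on vertex identities in a topograph: e, f, g are the oriented edge labels at a vertex and D is the discriminant.) -/

import Mathlib

/-- The inverse hyperbolic tangent. -/
noncomputable def artanh (x : ℝ) : ℝ := (1 / 2) * Real.log ((1 + x) / (1 - x))

/-! With `s = √D` and `x, y, z = s / e, s / f, s / g`, the sum of the three `artanh`s is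
`½ log ((1 + x)(1 + y)(1 + z) / ((1 - x)(1 - y)(1 - z)))`. Numerator minus denominator is
`2 (x + y + z + x y z) = 2 s (s² + e f + f g + g e) / (e f g) = 0`, so the logarithm vanishes. -/

lemma artanh_add_artanh_add_artanh {x y z : ℝ} (hx : |x| < 1) (hy : |y| < 1) (hz : |z| < 1) :
    artanh x + artanh y + artanh z =
      1 / 2 * Real.log ((1 + x) * (1 + y) * (1 + z) / ((1 - x) * (1 - y) * (1 - z))) := by
  have ratio_pos : ∀ {t : ℝ}, |t| < 1 → 0 < (1 + t) / (1 - t) := fun {t} ht ↦ by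
    obtain ⟨h₁, h₂⟩ := abs_lt.mp ht
    exact div_pos (by linarith) (by linarith)
  simp only [artanh, ← mul_add]
  rw [← Real.log_mul (ratio_pos hx).ne' (ratio_pos hy).ne',
    ← Real.log_mul (mul_pos (ratio_pos hx) (ratio_pos hy)).ne' (ratio_pos hz).ne',
    div_mul_div_comm, div_mul_div_comm]

lemma artanh_add_artanh_add_artanh_eq_zero {x y z : ℝ} (hx : |x| < 1) (hy : |y| < 1)
    (hz : |z| < 1) (h : x + y + z + x * y * z = 0) :
    artanh x + artanh y + artanh z = 0 := by
  have sub_pos : ∀ {t : ℝ}, |t| < 1 → 0 < 1 - t := fun {t} ht ↦ by linarith [le_abs_self t]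
  have denom_pos := mul_pos (mul_pos (sub_pos hx) (sub_pos hy)) (sub_pos hz)
  have numer_eq : (1 + x) * (1 + y) * (1 + z) = (1 - x) * (1 - y) * (1 - z) := by
    linear_combination 2 * h
  rw [artanh_add_artanh_add_artanh hx hy hz, numer_eq, div_self denom_pos.ne', Real.log_one,
    mul_zero]

lemma div_add_div_add_div_add_mul_eq_zero {s e f g : ℝ} (he : e ≠ 0) (hf : f ≠ 0) (hg : g ≠ 0)
    (hs : s ^ 2 = -(e * f + f * g + g * e)) :
    s / e + s / f + s / g + s / e * (s / f) * (s / g) = 0 := by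
  field_simp
  linear_combination s * hs

lemma abs_div_lt_one_of_lt_abs {s x : ℝ} (hs : 0 ≤ s) (h : s < |x|) : |s / x| < 1 := by
  rw [abs_div, abs_of_nonneg hs]
  exact (div_lt_one (hs.trans_lt h)).mpr h

theorem stmt_6 (e f g : ℝ) (he : e ≠ 0) (hf : f ≠ 0) (hg : g ≠ 0)
    (hD : 0 < -(e * f + f * g + g * e))
    (h1 : Real.sqrt (-(e * f + f * g + g * e)) < |e|)
    (h2 : Real.sqrt (-(e * f + f * g + g * e)) < |f|)
    (h3 : Real.sqrt (-(e * f + f * g + g * e)) < |g|) :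
    artanh (Real.sqrt (-(e * f + f * g + g * e)) / e) +
      artanh (Real.sqrt (-(e * f + f * g + g * e)) / f) +
      artanh (Real.sqrt (-(e * f + f * g + g * e)) / g) = 0 := by
  have hs := Real.sqrt_nonneg (-(e * f + f * g + g * e))
  exact artanh_add_artanh_add_artanh_eq_zero (abs_div_lt_one_of_lt_abs hs h1)
    (abs_div_lt_one_of_lt_abs hs h2) (abs_div_lt_one_of_lt_abs hs h3)
    (div_add_div_add_div_add_mul_eq_zero he hf hg (Real.sq_sqrt hD.le))
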